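/- Let q be a quadratic form with rational coefficients on V = ℝ^{d+1} of signature (1,d) with d ≥ 2, and let Q = {[x] ∈ ℙ(V) : q(x) = 0} be the associated projective quadric. If Q contains a rational point, i.e. there exists a nonzero u ∈ ℚ^{d+1} with q(u) = 0, then the set of rational points of Q (points [v] with v ∈ ℚ^{d+1} nonzero, q(v) = 0) is dense in Q for the analytic topology. -/

import Mathlib

/- STATEMENT 18: Let q be a quadratic form with rational coefficients on V = ℝ^{d+1} of
signature (1,d) with d ≥ 2, and Q the associated projective quadric.  If Q contains a
rational point, then the rational points of Q are dense in Q (analytic topology). -/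

noncomputable instance projectivizationTopology (K W : Type*) [DivisionRing K] [AddCommGroup W]
    [Module K W] [TopologicalSpace W] : TopologicalSpace (Projectivization K W) :=
  inferInstanceAs (TopologicalSpace (Quotient (projectivizationSetoid K W)))

/-- The rational points of `V = ℝ^{d+1}`. -/
def ratPts (d : ℕ) : Set (Fin (d + 1) → ℝ) := {x | ∀ i, ∃ r : ℚ, x i = (r : ℝ)}

/-- `q` is nondegenerate of signature `(1, d)`. -/
def hasSigOneD (d : ℕ) (B : (Fin (d + 1) → ℝ) →ₗ[ℝ] (Fin (d + 1) → ℝ) →ₗ[ℝ] ℝ) : Prop :=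
  ∃ b : Module.Basis (Fin (d + 1)) ℝ (Fin (d + 1) → ℝ),
    (∀ i j, i ≠ j → B (b i) (b j) = 0) ∧
    (0 < B (b 0) (b 0)) ∧ ∀ i, i ≠ 0 → B (b i) (b i) < 0

/-- The projective quadric `Q = {[x] ∈ ℙ(V) : q(x) = 0}`. -/
def QSet (d : ℕ) (B : (Fin (d + 1) → ℝ) →ₗ[ℝ] (Fin (d + 1) → ℝ) →ₗ[ℝ] ℝ) :
    Set (Projectivization ℝ (Fin (d + 1) → ℝ)) :=
  {p | B p.rep p.rep = 0}

/-! Fix the rational isotropic vector `u` and take `x` with `[x] ∈ Q`. If `B(u, x) = 0`, then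
`x` is a multiple of `u`, because a form of signature `(1, d)` is negative definite on a
hyperplane, which meets the span of two independent orthogonal isotropic vectors. Otherwise,
projecting from `u`, `w ↦ q(w) u - 2 B(u, w) w` is continuous, sends every vector to an isotropic
one, rational vectors to rational ones, and `x` to a nonzero multiple of `x`; so density of
`ℚ^{d+1}` in `ℝ^{d+1}` yields rational points of `Q` converging to `[x]`. -/

open Topology Module Matrix

section BilinearForm

variable {ι R : Type*} [Fintype ι] [DecidableEq ι] [CommRing R]

lemma LinearMap.apply_eq_dotProduct_toMatrix₂'_mulVec (B : (ι → R) →ₗ[R] (ι → R) →ₗ[R] R)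
    (x y : ι → R) : B x y = x ⬝ᵥ (LinearMap.toMatrix₂' R B *ᵥ y) := by
  rw [← Matrix.toLinearMap₂'_apply', Matrix.toLinearMap₂'_toMatrix']

lemma LinearMap.continuous_apply₂ [TopologicalSpace R] [IsTopologicalRing R]
    (B : (ι → R) →ₗ[R] (ι → R) →ₗ[R] R) {α : Type*} [TopologicalSpace α] {f g : α → ι → R}
    (hf : Continuous f) (hg : Continuous g) : Continuous fun a => B (f a) (g a) := by
  simp_rw [B.apply_eq_dotProduct_toMatrix₂'_mulVec]
  exact hf.dotProduct (continuous_const.matrix_mulVec hg)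

lemma LinearMap.apply_self_eq_sum_of_orthogonal {M : Type*} [AddCommGroup M] [Module R M]
    (B : M →ₗ[R] M →ₗ[R] R) (b : Basis ι R M) (horth : ∀ i j, i ≠ j → B (b i) (b j) = 0)
    (v : M) : B v v = ∑ i, b.repr v i ^ 2 * B (b i) (b i) := by
  conv_lhs => rw [← Matrix.toLinearMap₂_toMatrix₂ b b B]
  rw [Matrix.toLinearMap₂_apply]
  refine Finset.sum_congr rfl fun i _ => ?_
  rw [Finset.sum_eq_single i (fun j _ hji => by
    rw [LinearMap.toMatrix₂_apply, horth i j hji.symm, smul_zero, smul_zero]) (by simp)]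
  simp only [LinearMap.toMatrix₂_apply, smul_eq_mul]
  ring

end BilinearForm

lemma eq_zero_of_isotropic_of_repr_eq_zero {ι M : Type*} [Fintype ι] [DecidableEq ι]
    [AddCommGroup M] [Module ℝ M] {B : M →ₗ[ℝ] M →ₗ[ℝ] ℝ} {b : Basis ι ℝ M}
    (horth : ∀ i j, i ≠ j → B (b i) (b j) = 0) {i₀ : ι} (hneg : ∀ i, i ≠ i₀ → B (b i) (b i) < 0)
    {v : M} (hv : b.repr v i₀ = 0) (hvv : B v v = 0) : v = 0 := by
  have hterm_nonpos : ∀ i ∈ Finset.univ, b.repr v i ^ 2 * B (b i) (b i) ≤ 0 := fun i _ => by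
    rcases eq_or_ne i i₀ with rfl | hi
    · simp [hv]
    · exact mul_nonpos_of_nonneg_of_nonpos (sq_nonneg _) (hneg i hi).le
  rw [B.apply_self_eq_sum_of_orthogonal b horth,
    Finset.sum_eq_zero_iff_of_nonpos hterm_nonpos] at hvv
  refine b.forall_coord_eq_zero_iff.1 fun i => ?_
  rcases eq_or_ne i i₀ with rfl | hi
  · exact hv
  · simpa [(hneg i hi).ne] using hvv i (Finset.mem_univ i)

lemma exists_smul_eq_of_isotropic {d : ℕ} {B : (Fin (d + 1) → ℝ) →ₗ[ℝ] (Fin (d + 1) → ℝ) →ₗ[ℝ] ℝ}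
    (hsymm : ∀ x y, B x y = B y x) (hsig : hasSigOneD d B) {u x : Fin (d + 1) → ℝ} (hu : u ≠ 0)
    (huu : B u u = 0) (hxx : B x x = 0) (hux : B u x = 0) : ∃ c : ℝ, x = c • u := by
  obtain ⟨b, horth, -, hneg⟩ := hsig
  have hker {v} (hv : b.repr v 0 = 0) (hvv : B v v = 0) : v = 0 :=
    eq_zero_of_isotropic_of_repr_eq_zero horth hneg hv hvv
  have hu0 : b.repr u 0 ≠ 0 := fun h => hu (hker h huu)
  -- this combination of `u` and `x` lies in the negative definite hyperplane
  have hcomb : b.repr x 0 • u - b.repr u 0 • x = 0 := by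
    refine hker (by simp only [map_sub, map_smul, Finsupp.coe_sub, Finsupp.coe_smul, Pi.sub_apply,
      Pi.smul_apply, smul_eq_mul]; ring) ?_
    simp only [map_sub, map_smul, LinearMap.sub_apply, LinearMap.smul_apply, smul_eq_mul,
      huu, hxx, hux, hsymm x u]
    ring
  refine ⟨b.repr x 0 / b.repr u 0, ?_⟩
  rw [sub_eq_zero] at hcomb
  rw [div_eq_inv_mul, mul_smul, hcomb, smul_smul, inv_mul_cancel₀ hu0, one_smul]

section IsotropicProj

variable {R M : Type*} [CommRing R] [AddCommGroup M] [Module R M] (B : M →ₗ[R] M →ₗ[R] R)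

/-- For isotropic `u`, the point of the quadric on the line through `u` and `w` other than `u`:
`q(a u + b w) = b (2 a B(u, w) + b q(w))` vanishes at `(a, b) = (q(w), -2 B(u, w))`. -/
def isotropicProj (u w : M) : M := B w w • u - (2 * B u w) • w

lemma isotropicProj_isotropic (hsymm : ∀ x y, B x y = B y x) {u : M} (huu : B u u = 0) (w : M) :
    B (isotropicProj B u w) (isotropicProj B u w) = 0 := by
  simp only [isotropicProj, map_sub, map_smul, LinearMap.sub_apply, LinearMap.smul_apply,
    smul_eq_mul, huu, hsymm w u]
  ring

lemma isotropicProj_of_isotropic (u : M) {w : M} (hww : B w w = 0) :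
    isotropicProj B u w = (-(2 * B u w)) • w := by
  simp [isotropicProj, hww]

lemma continuous_isotropicProj {ι : Type*} [Fintype ι] [DecidableEq ι] [TopologicalSpace R]
    [IsTopologicalRing R] (B : (ι → R) →ₗ[R] (ι → R) →ₗ[R] R) (u : ι → R) :
    Continuous (isotropicProj B u) :=
  ((B.continuous_apply₂ continuous_id continuous_id).smul continuous_const).sub
    ((continuous_const.mul (B.continuous_apply₂ continuous_const continuous_id)).smul
      continuous_id)

end IsotropicProj

lemma ratPts_dense (d : ℕ) : Dense (ratPts d) := by
  have : ratPts d = Set.pi Set.univ fun _ => Set.range ((↑) : ℚ → ℝ) := by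
    ext x
    simp [ratPts, Set.mem_pi, eq_comm]
  rw [this]
  exact dense_pi Set.univ fun _ _ => Rat.denseRange_cast

section RationalPoints

variable {d : ℕ} {B : (Fin (d + 1) → ℝ) →ₗ[ℝ] (Fin (d + 1) → ℝ) →ₗ[ℝ] ℝ}

lemma exists_rat_apply_eq (hratcoef : ∀ i j, ∃ r : ℚ, B (Pi.single i 1) (Pi.single j 1) = r)
    {x y : Fin (d + 1) → ℝ} (hx : x ∈ ratPts d) (hy : y ∈ ratPts d) : ∃ r : ℚ, B x y = r := by
  choose x' hx' using hx
  choose y' hy' using hy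
  choose A hA using hratcoef
  refine ⟨x' ⬝ᵥ (A *ᵥ y'), ?_⟩
  rw [B.apply_eq_dotProduct_toMatrix₂'_mulVec]
  simp only [dotProduct, mulVec, LinearMap.toMatrix₂'_apply, hx', hy', hA]
  push_cast
  rfl

lemma isotropicProj_mem_ratPts
    (hratcoef : ∀ i j, ∃ r : ℚ, B (Pi.single i 1) (Pi.single j 1) = r)
    {u w : Fin (d + 1) → ℝ} (hu : u ∈ ratPts d) (hw : w ∈ ratPts d) :
    isotropicProj B u w ∈ ratPts d := by
  intro i
  obtain ⟨a, ha⟩ := exists_rat_apply_eq hratcoef hw hw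
  obtain ⟨b, hb⟩ := exists_rat_apply_eq hratcoef hu hw
  obtain ⟨ui, hui⟩ := hu i
  obtain ⟨wi, hwi⟩ := hw i
  exact ⟨a * ui - 2 * b * wi, by simp [isotropicProj, ha, hb, hui, hwi]⟩

end RationalPoints

lemma Projectivization.mk_mem_closure_of_dense {K V X : Type*} [DivisionRing K] [AddCommGroup V]
    [Module K V] [TopologicalSpace V] [T1Space V] [TopologicalSpace X] {φ : X → V}
    (hφ : Continuous φ) {S : Set X} (hS : Dense S) {x : X} (hx : φ x ≠ 0) :
    mk K (φ x) hx ∈ closure {p | ∃ w ∈ S, ∃ hw : φ w ≠ 0, p = mk K (φ w) hw} := by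
  set U : Set X := {w | φ w ≠ 0}
  have hU : IsOpen U := isOpen_compl_singleton.preimage hφ
  let Φ : U → Projectivization K V := fun w => mk' K ⟨φ w, w.2⟩
  have hΦ : Continuous Φ :=
    continuous_quotient_mk'.comp ((hφ.comp continuous_subtype_val).subtype_mk fun w => w.2)
  have hSU : Dense (((↑) : U → X) ⁻¹' S) := hS.preimage hU.isOpenMap_subtype_val
  refine map_mem_closure (f := Φ) hΦ (hSU.closure_eq ▸ Set.mem_univ (⟨x, hx⟩ : U)) ?_
  exact fun w hw => ⟨w, hw, w.2, rfl⟩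

theorem stmt_18_general (d : ℕ)
    (B : (Fin (d + 1) → ℝ) →ₗ[ℝ] (Fin (d + 1) → ℝ) →ₗ[ℝ] ℝ)
    (hsymm : ∀ x y, B x y = B y x)
    -- q has rational coefficients
    (hratcoef : ∀ i j, ∃ r : ℚ, B (Pi.single i 1) (Pi.single j 1) = (r : ℝ))
    (hsig : hasSigOneD d B)
    -- Q contains a rational point
    (hQrat : ∃ u : Fin (d + 1) → ℝ, u ∈ ratPts d ∧ u ≠ 0 ∧ B u u = 0) :
    -- the rational points of Q are dense in Q
    QSet d B ⊆
      closure {p | ∃ v ∈ ratPts d, ∃ hv : v ≠ 0, B v v = 0 ∧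
        p = Projectivization.mk ℝ v hv} := by
  obtain ⟨u, hu_rat, hu0, huu⟩ := hQrat
  intro p (hp : B p.rep p.rep = 0)
  by_cases hup : B u p.rep = 0
  · obtain ⟨c, hc⟩ := exists_smul_eq_of_isotropic hsymm hsig hu0 huu hp hup
    refine subset_closure ⟨u, hu_rat, hu0, huu, ?_⟩
    rw [← p.mk_rep, Projectivization.mk_eq_mk_iff']
    exact ⟨c, hc.symm⟩
  · have hproj : isotropicProj B u p.rep ≠ 0 := by
      rw [isotropicProj_of_isotropic B u hp]
      exact smul_ne_zero (by simpa using hup) p.rep_nonzero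
    have hp_eq : Projectivization.mk ℝ _ hproj = p := by
      conv_rhs => rw [← p.mk_rep]
      rw [Projectivization.mk_eq_mk_iff']
      exact ⟨_, (isotropicProj_of_isotropic B u hp).symm⟩
    rw [← hp_eq]
    refine closure_mono ?_ <| Projectivization.mk_mem_closure_of_dense
      (continuous_isotropicProj B u) (ratPts_dense d) hproj
    rintro _ ⟨w, hw, hw0, rfl⟩
    exact ⟨_, isotropicProj_mem_ratPts hratcoef hu_rat hw, hw0,
      isotropicProj_isotropic B hsymm huu w, rfl⟩

theorem stmt_18 (d : ℕ) (hd : 2 ≤ d)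
    (B : (Fin (d + 1) → ℝ) →ₗ[ℝ] (Fin (d + 1) → ℝ) →ₗ[ℝ] ℝ)
    (hsymm : ∀ x y, B x y = B y x)
    -- q has rational coefficients
    (hratcoef : ∀ i j, ∃ r : ℚ, B (Pi.single i 1) (Pi.single j 1) = (r : ℝ))
    (hsig : hasSigOneD d B)
    -- Q contains a rational point
    (hQrat : ∃ u : Fin (d + 1) → ℝ, u ∈ ratPts d ∧ u ≠ 0 ∧ B u u = 0) :
    -- the rational points of Q are dense in Q
    QSet d B ⊆
      closure {p | ∃ v ∈ ratPts d, ∃ hv : v ≠ 0, B v v = 0 ∧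
        p = Projectivization.mk ℝ v hv} :=
  stmt_18_general d B hsymm hratcoef hsig hQrat
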